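/- (Gallagher's large sieve, q = 1 case) There is an absolute constant C such that for any T > 1 and any sequence of complex numbers (a_n)_{n≥1} with Σ|a_n| < ∞, one has ∫_{−T}^{T} |Σ_n a_n n^{it}|² dt ≤ C·Σ_n (T + n)|a_n|². -/

import Mathlib

/-!
Weight the mean square by the Gaussian `w(t) = exp(-(t/T)²)`, which is at least `e⁻¹` on
`[-T, T]`. Expanding `|∑ aₙ n^{it}|²` as a double series and integrating term by term turns
`∫ w |∑ aₙ n^{it}|²` into `∑ₘₙ aₘ conj(aₙ) ŵ(log m - log n)`, and `ŵ(θ) = √π T exp(-(Tθ/2)²)` is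
positive. Since `s²/4 ≥ 2s - 4`, the kernel `exp(-(T log(m/n)/2)²)` is at most
`e⁴ min(m/n, n/m)^{2T}`, whose sum over `m` is `O(1 + n/T)` by comparison with `∫ x^{±2T} dx`.
The bound `|aₘ aₙ| ≤ (|aₘ|² + |aₙ|²)/2` (Schur's test) finishes the proof.
-/

open Complex intervalIntegral Finset MeasureTheory Real ComplexConjugate

theorem sum_range_add_one_rpow_le {p : ℝ} (hp : 0 ≤ p) (n : ℕ) :
    ∑ i ∈ range n, ((i : ℝ) + 1) ^ p ≤ ((n : ℝ) + 1) ^ (p + 1) / (p + 1) := by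
  have hmono : MonotoneOn (· ^ p) (Set.Icc (1 : ℝ) (1 + n)) := fun x hx y _ hxy =>
    rpow_le_rpow (by linarith [hx.1]) hxy hp
  calc ∑ i ∈ range n, ((i : ℝ) + 1) ^ p = ∑ i ∈ range n, (1 + (i : ℝ)) ^ p := by
        simp only [add_comm]
    _ ≤ ∫ x in (1 : ℝ)..1 + n, x ^ p := hmono.sum_le_integral
    _ = (((n : ℝ) + 1) ^ (p + 1) - 1) / (p + 1) := by
        rw [integral_rpow (Or.inl (by linarith)), one_rpow, add_comm (1 : ℝ)]
    _ ≤ ((n : ℝ) + 1) ^ (p + 1) / (p + 1) := by gcongr; linarith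

theorem sum_range_add_rpow_neg_le {x p : ℝ} (hx : 0 < x) (hp : 1 < p) (n : ℕ) :
    ∑ i ∈ range n, (x + i) ^ (-p) ≤ x ^ (-p) + x ^ (1 - p) / (p - 1) := by
  have hanti : AntitoneOn (· ^ (-p)) (Set.Icc x (x + n)) := fun s hs t _ hst =>
    rpow_le_rpow_of_nonpos (by linarith [hs.1]) hst (by linarith)
  have hint : ∫ t in x..x + n, t ^ (-p) ≤ x ^ (1 - p) / (p - 1) := by
    have hzero : (0 : ℝ) ∉ Set.uIcc x (x + n) := by
      rw [Set.uIcc_of_le (le_add_of_nonneg_right n.cast_nonneg)]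
      exact fun h => h.1.not_gt hx
    rw [integral_rpow (Or.inr ⟨by linarith, hzero⟩), ← neg_div_neg_eq, neg_sub, neg_add',
      neg_neg, show -p + 1 = 1 - p by ring]
    gcongr
    exact sub_le_self _ (by positivity)
  calc ∑ i ∈ range n, (x + i) ^ (-p) ≤ ∑ i ∈ range (n + 1), (x + i) ^ (-p) :=
        sum_le_sum_of_subset_of_nonneg (range_subset_range.2 n.le_succ) fun i _ _ => by positivity
    _ = x ^ (-p) + ∑ i ∈ range n, (x + ↑(i + 1)) ^ (-p) := by
        rw [sum_range_succ', add_comm]; simp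
    _ ≤ x ^ (-p) + x ^ (1 - p) / (p - 1) := by
        gcongr; exact hanti.sum_le_integral.trans hint

theorem exp_neg_sq_mul_log_sub_le {x y : ℝ} (hx : 0 < x) (hy : 0 < y) (T : ℝ) :
    Real.exp (-(T * (Real.log x - Real.log y) / 2) ^ 2) ≤ Real.exp 4 * (x / y) ^ (2 * T) := by
  rw [rpow_def_of_pos (div_pos hx hy), log_div hx.ne' hy.ne', ← Real.exp_add]
  exact Real.exp_le_exp.2 (by nlinarith [sq_nonneg (T * (Real.log x - Real.log y) / 2 + 2)])

noncomputable def logGaussKernel (T : ℝ) (m n : ℕ) : ℝ :=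
  Real.exp (-(T * (Real.log ((m : ℝ) + 1) - Real.log ((n : ℝ) + 1)) / 2) ^ 2)

namespace logGaussKernel

theorem nonneg (T : ℝ) (m n : ℕ) : 0 ≤ logGaussKernel T m n := (Real.exp_pos _).le

theorem symm (T : ℝ) (m n : ℕ) : logGaussKernel T m n = logGaussKernel T n m := by
  rw [logGaussKernel, logGaussKernel, ← neg_sub, mul_neg, neg_div, neg_sq]

theorem le_exp_four_mul_rpow (T : ℝ) (m n : ℕ) :
    logGaussKernel T m n ≤ Real.exp 4 * (((m : ℝ) + 1) / ((n : ℝ) + 1)) ^ (2 * T) :=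
  exp_neg_sq_mul_log_sub_le (by positivity) (by positivity) T

end logGaussKernel

theorem sum_range_logGaussKernel_le_of_lt {T : ℝ} (hT : 0 ≤ T) (n : ℕ) :
    ∑ m ∈ range n, logGaussKernel T m n ≤ Real.exp 4 * (((n : ℝ) + 1) / (2 * T + 1)) := by
  set N : ℝ := (n : ℝ) + 1
  have hN0 : 0 < N := by positivity
  calc ∑ m ∈ range n, logGaussKernel T m n
      ≤ ∑ m ∈ range n, Real.exp 4 * N ^ (-(2 * T)) * ((m : ℝ) + 1) ^ (2 * T) := by
        gcongr with m
        rw [mul_assoc, rpow_neg hN0.le, ← div_eq_inv_mul, ← div_rpow (by positivity) hN0.le]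
        exact logGaussKernel.le_exp_four_mul_rpow T m n
    _ ≤ Real.exp 4 * N ^ (-(2 * T)) * (N ^ (2 * T + 1) / (2 * T + 1)) := by
        rw [← mul_sum]; gcongr; exact sum_range_add_one_rpow_le (by linarith) n
    _ = Real.exp 4 * (N / (2 * T + 1)) := by
        rw [rpow_add hN0, rpow_one, rpow_neg hN0.le]; field_simp

theorem sum_range_logGaussKernel_add_le {T : ℝ} (hT : 1 / 2 < T) (n L : ℕ) :
    ∑ k ∈ range L, logGaussKernel T (n + k) n ≤
      Real.exp 4 * (1 + ((n : ℝ) + 1) / (2 * T - 1)) := by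
  set N : ℝ := (n : ℝ) + 1
  have hN0 : 0 < N := by positivity
  calc ∑ k ∈ range L, logGaussKernel T (n + k) n
      ≤ ∑ k ∈ range L, Real.exp 4 * N ^ (2 * T) * (N + k) ^ (-(2 * T)) := by
        gcongr with k
        rw [logGaussKernel.symm, mul_assoc, rpow_neg (by positivity), ← div_eq_mul_inv,
          ← div_rpow hN0.le (by positivity)]
        have hk : ((n + k : ℕ) : ℝ) + 1 = N + k := by push_cast; ring
        simpa only [hk] using logGaussKernel.le_exp_four_mul_rpow T n (n + k)
    _ ≤ Real.exp 4 * N ^ (2 * T) * (N ^ (-(2 * T)) + N ^ (1 - 2 * T) / (2 * T - 1)) := by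
        rw [← mul_sum]; gcongr; exact sum_range_add_rpow_neg_le hN0 (by linarith) L
    _ = Real.exp 4 * (1 + N / (2 * T - 1)) := by
        rw [mul_assoc, mul_add, ← rpow_add hN0, mul_div_assoc', ← rpow_add hN0]
        norm_num

theorem sum_range_logGaussKernel_le {T : ℝ} (hT : 1 ≤ T) (n L : ℕ) :
    ∑ m ∈ range L, logGaussKernel T m n ≤ 2 * Real.exp 4 / T * (T + ((n : ℝ) + 1)) := by
  set N : ℝ := (n : ℝ) + 1
  have hN0 : 0 < N := by positivity
  have h1 : N / (2 * T + 1) ≤ N / T :=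
    div_le_div_of_nonneg_left hN0.le (by linarith) (by linarith)
  have h2 : N / (2 * T - 1) ≤ N / T :=
    div_le_div_of_nonneg_left hN0.le (by linarith) (by linarith)
  calc ∑ m ∈ range L, logGaussKernel T m n
      ≤ ∑ m ∈ range (n + L), logGaussKernel T m n :=
        sum_le_sum_of_subset_of_nonneg (range_subset_range.2 (Nat.le_add_left L n))
          fun m _ _ => logGaussKernel.nonneg T m n
    _ = ∑ m ∈ range n, logGaussKernel T m n + ∑ k ∈ range L, logGaussKernel T (n + k) n :=
        sum_range_add _ n L
    _ ≤ Real.exp 4 * (N / (2 * T + 1)) + Real.exp 4 * (1 + N / (2 * T - 1)) :=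
        add_le_add (sum_range_logGaussKernel_le_of_lt (by linarith) n)
          (sum_range_logGaussKernel_add_le (by linarith) n L)
    _ ≤ Real.exp 4 * (2 + 2 * (N / T)) := by
        rw [← mul_add]
        exact mul_le_mul_of_nonneg_left (by linarith) (Real.exp_pos 4).le
    _ = 2 * Real.exp 4 / T * (T + N) := by
        field_simp

theorem summable_logGaussKernel {T : ℝ} (hT : 1 ≤ T) (n : ℕ) :
    Summable fun m => logGaussKernel T m n :=
  summable_of_sum_range_le (fun m => logGaussKernel.nonneg T m n)
    (sum_range_logGaussKernel_le hT n)

theorem tsum_logGaussKernel_le {T : ℝ} (hT : 1 ≤ T) (n : ℕ) :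
    ∑' m, logGaussKernel T m n ≤ 2 * Real.exp 4 / T * (T + ((n : ℝ) + 1)) :=
  Real.tsum_le_of_sum_range_le (fun m => logGaussKernel.nonneg T m n)
    (sum_range_logGaussKernel_le hT n)

theorem tsum_mul_mul_kernel_le_of_symm {ι : Type*} {K : ι → ι → ℝ} {x R : ι → ℝ}
    (hK : ∀ i j, 0 ≤ K i j) (hK_symm : ∀ i j, K i j = K j i) (hx : ∀ i, 0 ≤ x i)
    (hrow : ∀ j, Summable fun i => K i j) (hrow_le : ∀ j, ∑' i, K i j ≤ R j)
    (hR : Summable fun j => R j * x j ^ 2) :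
    ∑' p : ι × ι, x p.1 * x p.2 * K p.1 p.2 ≤ ∑' j, R j * x j ^ 2 := by
  set G : ι × ι → ℝ := fun q => x q.1 ^ 2 * K q.2 q.1
  have hG_nonneg : 0 ≤ G := fun q => mul_nonneg (sq_nonneg _) (hK _ _)
  have hG_row (j : ι) : ∑' i, G (j, i) ≤ R j * x j ^ 2 := by
    rw [show ∑' i, G (j, i) = x j ^ 2 * ∑' i, K i j by simp only [G]; exact tsum_mul_left,
      mul_comm]
    exact mul_le_mul_of_nonneg_right (hrow_le j) (sq_nonneg _)
  have hG : Summable G := (summable_prod_of_nonneg hG_nonneg).2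
    ⟨fun j => (hrow j).mul_left (x j ^ 2),
      Summable.of_nonneg_of_le (fun j => tsum_nonneg fun i => hG_nonneg (j, i)) hG_row hR⟩
  have hG_swap : ∑' p : ι × ι, G p.swap = ∑' p, G p := (Equiv.prodComm ι ι).tsum_eq G
  have hG_avg : Summable fun p : ι × ι => (G p + G p.swap) / 2 :=
    (hG.add hG.prod_symm).div_const 2
  have hamgm (p : ι × ι) : x p.1 * x p.2 * K p.1 p.2 ≤ (G p + G p.swap) / 2 := by
    simp only [G, Prod.fst_swap, Prod.snd_swap, hK_symm p.2 p.1]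
    nlinarith [mul_nonneg (sq_nonneg (x p.1 - x p.2)) (hK p.1 p.2)]
  calc ∑' p : ι × ι, x p.1 * x p.2 * K p.1 p.2 ≤ ∑' p, (G p + G p.swap) / 2 :=
        Summable.tsum_le_tsum hamgm (hG_avg.of_nonneg_of_le
          (fun p => mul_nonneg (mul_nonneg (hx _) (hx _)) (hK _ _)) hamgm) hG_avg
    _ = ∑' p, G p := by
        rw [tsum_div_const, hG.tsum_add hG.prod_symm, hG_swap, add_self_div_two]
    _ = ∑' j, ∑' i, G (j, i) := hG.tsum_prod
    _ ≤ ∑' j, R j * x j ^ 2 :=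
        Summable.tsum_le_tsum hG_row hG.prod hR

noncomputable def gaussWeight (T t : ℝ) : ℝ :=
  Real.exp (-(t / T) ^ 2)

theorem gaussWeight_nonneg (T t : ℝ) : 0 ≤ gaussWeight T t := (Real.exp_pos _).le

theorem integrable_gaussWeight {T : ℝ} (hT : T ≠ 0) : Integrable (gaussWeight T) :=
  (integrable_exp_neg_mul_sq (b := (T ^ 2)⁻¹) (by positivity)).congr
    (ae_of_all _ fun t => by dsimp only [gaussWeight]; rw [div_pow, div_eq_inv_mul, neg_mul])

theorem one_le_exp_one_mul_gaussWeight {T t : ℝ} (ht : |t| ≤ T) :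
    1 ≤ Real.exp 1 * gaussWeight T t := by
  have hT : 0 ≤ T := (abs_nonneg t).trans ht
  have hsq : (t / T) ^ 2 ≤ 1 := (sq_le_one_iff_abs_le_one _).2 <| by
    rw [abs_div, abs_of_nonneg hT]; exact div_le_one_of_le₀ ht hT
  rw [gaussWeight, ← Real.exp_add]
  exact Real.one_le_exp (by linarith)

theorem integral_gaussWeight_mul_cexp {T : ℝ} (hT : 0 < T) (θ : ℝ) :
    ∫ t : ℝ, (gaussWeight T t : ℂ) * cexp (θ * t * I) =
      ((√π * T * Real.exp (-(T * θ / 2) ^ 2) : ℝ) : ℂ) := by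
  have hb : 0 < (((T ^ 2)⁻¹ : ℝ) : ℂ).re := by rw [ofReal_re]; positivity
  have hsqrt : ((π : ℂ) / ((T ^ 2)⁻¹ : ℝ)) ^ (1 / 2 : ℂ) = ((√π * T : ℝ) : ℂ) := by
    rw [← ofReal_div, div_inv_eq_mul, show (1 / 2 : ℂ) = ((1 / 2 : ℝ) : ℂ) by norm_num,
      ← ofReal_cpow (by positivity), ← sqrt_eq_rpow, sqrt_mul pi_pos.le, sqrt_sq hT.le]
  calc ∫ t : ℝ, (gaussWeight T t : ℂ) * cexp (θ * t * I)
      = ∫ t : ℝ, cexp (I * θ * t) * cexp (-(((T ^ 2)⁻¹ : ℝ) : ℂ) * t ^ 2) := by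
        refine integral_congr_ae (ae_of_all _ fun t => ?_)
        dsimp only [gaussWeight]
        rw [mul_comm, ofReal_exp]
        push_cast
        ring_nf
    _ = ((√π * T * Real.exp (-(T * θ / 2) ^ 2) : ℝ) : ℂ) := by
        rw [fourierIntegral_gaussian hb, hsqrt]
        push_cast
        congr 2
        field_simp
        ring

theorem integral_le_exp_one_mul_integral_gaussWeight_mul {T : ℝ} (hT : 0 ≤ T) {f : ℝ → ℝ}
    (hf : Continuous f) (hf0 : 0 ≤ f) (hwf : Integrable fun t => gaussWeight T t * f t) :
    ∫ t in (-T)..T, f t ≤ Real.exp 1 * ∫ t, gaussWeight T t * f t := by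
  calc ∫ t in (-T)..T, f t ≤ ∫ t in (-T)..T, Real.exp 1 * (gaussWeight T t * f t) :=
        integral_mono_on (by linarith) (hf.intervalIntegrable _ _)
          ((hwf.const_mul _).intervalIntegrable) fun t ht => by
            rw [← mul_assoc]
            exact le_mul_of_one_le_left (hf0 t)
              (one_le_exp_one_mul_gaussWeight (abs_le.2 ht))
    _ = Real.exp 1 * ∫ t in (-T)..T, gaussWeight T t * f t := integral_const_mul _ _
    _ ≤ Real.exp 1 * ∫ t, gaussWeight T t * f t := by
        rw [integral_of_le (by linarith)]
        refine mul_le_mul_of_nonneg_left ?_ (Real.exp_pos 1).le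
        exact setIntegral_le_integral hwf
          (ae_of_all _ fun t => mul_nonneg (gaussWeight_nonneg T t) (hf0 t))

theorem ofReal_cpow_ofReal_mul_I {x : ℝ} (hx : 0 < x) (t : ℝ) :
    (x : ℂ) ^ ((t : ℂ) * I) = cexp (Real.log x * t * I) := by
  rw [cpow_def_of_ne_zero (ofReal_ne_zero.2 hx.ne'), ← ofReal_log hx.le, mul_assoc]

noncomputable def expSum {ι : Type*} (a : ι → ℂ) (ν : ι → ℝ) (t : ℝ) : ℂ :=
  ∑' i, a i * cexp (ν i * t * I)

section expSum

variable {ι : Type*} {a : ι → ℂ} (ν : ι → ℝ)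

theorem norm_cexp_mul_mul_I (x t : ℝ) : ‖cexp (x * t * I)‖ = 1 := by
  exact_mod_cast norm_exp_ofReal_mul_I (x * t)

theorem continuous_expSum (ha : Summable fun i => ‖a i‖) : Continuous (expSum a ν) :=
  continuous_tsum (fun i => by fun_prop) ha fun i t => by
    rw [norm_mul, norm_cexp_mul_mul_I, mul_one]

theorem norm_expSum_le (ha : Summable fun i => ‖a i‖) (t : ℝ) :
    ‖expSum a ν t‖ ≤ ∑' i, ‖a i‖ := by
  refine (norm_tsum_le_tsum_norm ?_).trans_eq ?_ <;>
    simp only [norm_mul, norm_cexp_mul_mul_I, mul_one, ha]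

theorem expSum_mul_conj (ha : Summable fun i => ‖a i‖) (t : ℝ) :
    expSum a ν t * conj (expSum a ν t) =
      ∑' p : ι × ι, a p.1 * conj (a p.2) * cexp (↑(ν p.1 - ν p.2) * t * I) := by
  have hnorm : Summable fun i => ‖a i * cexp (ν i * t * I)‖ := by
    simpa only [norm_mul, norm_cexp_mul_mul_I, mul_one] using ha
  rw [expSum, conj_tsum, tsum_mul_tsum_of_summable_norm hnorm
    (by simpa only [RCLike.norm_conj] using hnorm)]
  refine tsum_congr fun p => ?_
  rw [map_mul, ← exp_conj, mul_mul_mul_comm, ← Complex.exp_add]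
  simp only [map_mul, conj_ofReal, conj_I]
  push_cast
  ring_nf

theorem integrable_mul_norm_expSum_sq {w : ℝ → ℝ} (hw : Integrable w)
    (ha : Summable fun i => ‖a i‖) : Integrable fun t => w t * ‖expSum a ν t‖ ^ 2 :=
  hw.mul_bdd (c := (∑' i, ‖a i‖) ^ 2) ((continuous_expSum ν ha).norm.pow 2).aestronglyMeasurable
    (ae_of_all _ fun t => by
      rw [Real.norm_of_nonneg (by positivity)]
      exact pow_le_pow_left₀ (norm_nonneg _) (norm_expSum_le ν ha t) 2)

theorem norm_ofReal_mul_cexp_mul_mul_I (w x t : ℝ) : ‖(w : ℂ) * cexp (x * t * I)‖ = ‖w‖ := by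
  rw [norm_mul, norm_cexp_mul_mul_I, mul_one, norm_real]

theorem integral_mul_expSum_mul_conj [Countable ι] {w : ℝ → ℝ} (hw : Integrable w)
    (ha : Summable fun i => ‖a i‖) :
    ∫ t, (w t : ℂ) * (expSum a ν t * conj (expSum a ν t)) =
      ∑' p : ι × ι, a p.1 * conj (a p.2) * ∫ t, (w t : ℂ) * cexp (↑(ν p.1 - ν p.2) * t * I) := by
  set F : ι × ι → ℝ → ℂ := fun p t =>
    a p.1 * conj (a p.2) * ((w t : ℂ) * cexp (↑(ν p.1 - ν p.2) * t * I))
  have hF_int (p : ι × ι) : Integrable (F p) :=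
    (hw.ofReal.mul_bdd (c := 1) (by fun_prop) (ae_of_all _ fun t => by
      rw [norm_cexp_mul_mul_I])).const_mul _
  have hF_norm (p : ι × ι) : ∫ t, ‖F p t‖ = ‖a p.1‖ * ‖a p.2‖ * ∫ t, ‖w t‖ := by
    simp only [F, norm_mul, RCLike.norm_conj, norm_cexp_mul_mul_I, mul_one, norm_real,
      MeasureTheory.integral_const_mul]
  have hF_sum : Summable fun p => ∫ t, ‖F p t‖ := by
    simp only [hF_norm]
    exact (ha.mul_of_nonneg ha (fun _ => norm_nonneg _) (fun _ => norm_nonneg _)).mul_right _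
  calc ∫ t, (w t : ℂ) * (expSum a ν t * conj (expSum a ν t)) = ∫ t, ∑' p, F p t := by
        refine integral_congr_ae (ae_of_all _ fun t => ?_)
        simp only [expSum_mul_conj ν ha, F, ← tsum_mul_left]
        exact tsum_congr fun p => by ring
    _ = ∑' p, ∫ t, F p t := (integral_tsum_of_summable_integral_norm hF_int hF_sum).symm
    _ = _ := tsum_congr fun p => MeasureTheory.integral_const_mul _ _

theorem integral_mul_norm_expSum_sq_le [Countable ι] {w : ℝ → ℝ} (hw : Integrable w)
    (ha : Summable fun i => ‖a i‖) :
    ∫ t, w t * ‖expSum a ν t‖ ^ 2 ≤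
      ∑' p : ι × ι, ‖a p.1‖ * ‖a p.2‖ * ‖∫ t, (w t : ℂ) * cexp (↑(ν p.1 - ν p.2) * t * I)‖ := by
  have hre : ∫ t, w t * ‖expSum a ν t‖ ^ 2 =
      (∫ t, (w t : ℂ) * (expSum a ν t * conj (expSum a ν t))).re := by
    simp_rw [mul_conj, ← ofReal_mul, integral_complex_ofReal, ofReal_re, normSq_eq_norm_sq]
  have hsum : Summable fun p : ι × ι =>
      ‖a p.1 * conj (a p.2) * ∫ t, (w t : ℂ) * cexp (↑(ν p.1 - ν p.2) * t * I)‖ := by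
    refine ((ha.mul_of_nonneg ha (fun _ => norm_nonneg _) (fun _ => norm_nonneg _)).mul_right
      (∫ t, ‖w t‖)).of_nonneg_of_le (fun _ => norm_nonneg _) fun p => ?_
    rw [norm_mul, norm_mul, RCLike.norm_conj]
    gcongr
    exact (MeasureTheory.norm_integral_le_integral_norm _).trans_eq
      (integral_congr_ae (ae_of_all _ fun t => norm_ofReal_mul_cexp_mul_mul_I _ _ _))
  rw [hre, integral_mul_expSum_mul_conj ν hw ha]
  refine (re_le_norm _).trans ((norm_tsum_le_tsum_norm hsum).trans_eq (tsum_congr fun p => ?_))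
  rw [norm_mul, norm_mul, RCLike.norm_conj]

end expSum

theorem integral_gaussWeight_mul_norm_expSum_log_sq_le {T : ℝ} (hT : 1 ≤ T) {a : ℕ → ℂ}
    (ha : Summable fun n => ‖a n‖)
    (hwa : Summable fun n : ℕ => (T + ((n : ℝ) + 1)) * ‖a n‖ ^ 2) :
    ∫ t, gaussWeight T t * ‖expSum a (fun n => Real.log ((n : ℝ) + 1)) t‖ ^ 2 ≤
      2 * √π * Real.exp 4 * ∑' n : ℕ, (T + ((n : ℝ) + 1)) * ‖a n‖ ^ 2 := by
  have hT0 : 0 < T := by linarith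
  have hSchur : ∑' p : ℕ × ℕ, ‖a p.1‖ * ‖a p.2‖ * logGaussKernel T p.1 p.2
      ≤ ∑' n : ℕ, 2 * Real.exp 4 / T * (T + ((n : ℝ) + 1)) * ‖a n‖ ^ 2 :=
    tsum_mul_mul_kernel_le_of_symm (logGaussKernel.nonneg T) (logGaussKernel.symm T)
      (fun n => norm_nonneg _) (summable_logGaussKernel hT) (tsum_logGaussKernel_le hT)
      (by simpa only [mul_assoc] using hwa.mul_left (2 * Real.exp 4 / T))
  calc ∫ t, gaussWeight T t * ‖expSum a (fun n => Real.log ((n : ℝ) + 1)) t‖ ^ 2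
      ≤ ∑' p : ℕ × ℕ, ‖a p.1‖ * ‖a p.2‖ * ‖∫ t, (gaussWeight T t : ℂ) *
          cexp (↑(Real.log ((p.1 : ℝ) + 1) - Real.log ((p.2 : ℝ) + 1)) * t * I)‖ :=
        integral_mul_norm_expSum_sq_le _ (integrable_gaussWeight hT0.ne') ha
    _ = √π * T * ∑' p : ℕ × ℕ, ‖a p.1‖ * ‖a p.2‖ * logGaussKernel T p.1 p.2 := by
        rw [← tsum_mul_left]
        refine tsum_congr fun p => ?_
        rw [integral_gaussWeight_mul_cexp hT0, norm_real, Real.norm_of_nonneg (by positivity),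
          logGaussKernel]
        ring
    _ ≤ √π * T * ∑' n : ℕ, 2 * Real.exp 4 / T * (T + ((n : ℝ) + 1)) * ‖a n‖ ^ 2 := by
        gcongr
    _ = 2 * √π * Real.exp 4 * ∑' n : ℕ, (T + ((n : ℝ) + 1)) * ‖a n‖ ^ 2 := by
        simp_rw [mul_assoc _ (T + _), tsum_mul_left]
        field_simp

/-- Gallagher's large sieve inequality (case `q = 1`): there is an absolute
constant `C` such that for all `T > 1` and all complex sequences `(a_n)_{n ≥ 1}`
with `∑ |a_n| < ∞` (and with `∑ (T + n)|a_n|²` finite),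
`∫_{-T}^{T} |∑_n a_n n^{it}|² dt ≤ C ∑_n (T + n)|a_n|²`.
Here `a n` stands for the coefficient attached to the integer `n + 1`. -/
theorem gallagher_large_sieve :
    ∃ C : ℝ, 0 < C ∧ ∀ T : ℝ, 1 < T → ∀ a : ℕ → ℂ,
      Summable (fun n : ℕ => ‖a n‖) →
      Summable (fun n : ℕ => (T + ((n : ℝ) + 1)) * ‖a n‖ ^ 2) →
      (∫ t in (-T)..T, ‖∑' n : ℕ, a n * ((n : ℂ) + 1) ^ ((t : ℂ) * Complex.I)‖ ^ 2) ≤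
        C * ∑' n : ℕ, (T + ((n : ℝ) + 1)) * ‖a n‖ ^ 2 := by
  refine ⟨2 * √π * Real.exp 5, by positivity, fun T hT a ha hwa => ?_⟩
  have hS (t : ℝ) : ∑' n : ℕ, a n * ((n : ℂ) + 1) ^ ((t : ℂ) * I) =
      expSum a (fun n => Real.log ((n : ℝ) + 1)) t := by
    refine tsum_congr fun n => ?_
    rw [show (n : ℂ) + 1 = ((n + 1 : ℝ) : ℂ) by push_cast; rfl,
      ofReal_cpow_ofReal_mul_I (by positivity)]
  simp_rw [hS]
  calc ∫ t in (-T)..T, ‖expSum a (fun n => Real.log ((n : ℝ) + 1)) t‖ ^ 2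
      ≤ Real.exp 1 * ∫ t, gaussWeight T t * ‖expSum a (fun n => Real.log ((n : ℝ) + 1)) t‖ ^ 2 :=
        integral_le_exp_one_mul_integral_gaussWeight_mul (by linarith)
          ((continuous_expSum _ ha).norm.pow 2) (fun t => by positivity)
          (integrable_mul_norm_expSum_sq _ (integrable_gaussWeight (by linarith)) ha)
    _ ≤ Real.exp 1 * (2 * √π * Real.exp 4 * ∑' n : ℕ, (T + ((n : ℝ) + 1)) * ‖a n‖ ^ 2) := by
        gcongr
        exact integral_gaussWeight_mul_norm_expSum_log_sq_le hT.le ha hwa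
    _ = 2 * √π * Real.exp 5 * ∑' n : ℕ, (T + ((n : ℝ) + 1)) * ‖a n‖ ^ 2 := by
        rw [show (5 : ℝ) = 1 + 4 by norm_num, Real.exp_add]
        ring
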